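/- For positive reals θ, μ, β, the inequality (Ψ_2(θ+μ+β)-Ψ_2(θ+μ))/(Ψ_1(θ+μ+β)-Ψ_1(θ+μ)) > (Ψ_2(θ+μ)-Ψ_2(θ))/(Ψ_1(θ+μ)-Ψ_1(θ)) holds, where Ψ_n is the polygamma function of order n. -/

import Mathlib

/-!
Write `Ψ₁` and `Ψ₂` through the Laplace-type integrand `g_k(x, t) = t^k e^{-xt} / (1 - e^{-t})`.
With the weight `w(t) = g₁(θ, t) - g₁(θ + μ, t) > 0`, the right-hand quotient is minus the
`w`-mean of `t`. Since `g₁(θ + μ) - g₁(θ + μ + β) = h·w` with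
`h(t) = (1 - e^{-βt}) / (e^{μt} - 1)`, the left-hand one is minus the `h·w`-mean of `t`.
The function `h` is strictly decreasing, so reweighting by it lowers the mean of `t` (Chebyshev's
integral inequality): at the `w`-mean `T`, the integrand `(h(T) - h(t))(t - T) w(t)` is positive.
-/

open MeasureTheory Real Set Filter

lemma one_sub_exp_neg_pos {t : ℝ} (ht : 0 < t) : 0 < 1 - exp (-t) := by
  linarith [exp_lt_one_iff.2 (neg_lt_zero.2 ht)]

lemma le_one_add_mul_one_sub_exp_neg (t : ℝ) : t ≤ (1 + t) * (1 - exp (-t)) := by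
  have h := add_one_le_exp t
  have : exp t * exp (-t) = 1 := by rw [← exp_add, add_neg_cancel, exp_zero]
  nlinarith [exp_pos (-t)]

lemma StrictAntiOn.sub_mul_sub_pos {α : Type*} [Ring α] [LinearOrder α] [IsStrictOrderedRing α]
    {s : Set α} {h : α → α} (hh : StrictAntiOn h s) {a b : α} (ha : a ∈ s) (hb : b ∈ s)
    (hab : a ≠ b) : 0 < (h a - h b) * (b - a) := by
  rcases hab.lt_or_gt with hab | hba
  · exact mul_pos (sub_pos.2 (hh ha hb hab)) (sub_pos.2 hab)
  · exact mul_pos_of_neg_of_neg (sub_neg.2 (hh hb ha hba)) (sub_neg.2 hba)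

lemma setIntegral_Ioi_pos {f : ℝ → ℝ} {a : ℝ} (hf : IntegrableOn f (Ioi a))
    (hf_nonneg : ∀ t > a, 0 ≤ f t) (hf_pos : ∀ᶠ t in atTop, 0 < f t) :
    0 < ∫ t in Ioi a, f t := by
  rw [setIntegral_pos_iff_support_of_nonneg_ae
    ((ae_restrict_iff' measurableSet_Ioi).2 (.of_forall hf_nonneg)) hf]
  obtain ⟨b, hb⟩ := eventually_atTop.1 hf_pos
  have hsub : Ioi (max a b) ⊆ Function.support f ∩ Ioi a := fun t ht =>
    ⟨(hb t (max_lt_iff.1 ht).2.le).ne', show a < t from (max_lt_iff.1 ht).1⟩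
  exact (measure_mono hsub).trans_lt' (by simp)

theorem integral_id_mul_mul_lt_of_strictAntiOn {w h : ℝ → ℝ} (hw : ∀ t > 0, 0 < w t)
    (hh : StrictAntiOn h (Ioi 0)) (hw_int : IntegrableOn w (Ioi 0))
    (htw_int : IntegrableOn (fun t => t * w t) (Ioi 0))
    (hhw_int : IntegrableOn (fun t => h t * w t) (Ioi 0))
    (hthw_int : IntegrableOn (fun t => t * (h t * w t)) (Ioi 0)) :
    (∫ t in Ioi 0, t * (h t * w t)) * ∫ t in Ioi 0, w t <
      (∫ t in Ioi 0, t * w t) * ∫ t in Ioi 0, h t * w t := by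
  have hpos {f : ℝ → ℝ} (hf : IntegrableOn f (Ioi 0)) (hf_pos : ∀ t > 0, 0 < f t) :
      0 < ∫ t in Ioi 0, f t :=
    setIntegral_Ioi_pos hf (fun t ht => (hf_pos t ht).le)
      ((eventually_gt_atTop 0).mono hf_pos)
  set D := ∫ t in Ioi 0, w t
  have hD : 0 < D := hpos hw_int hw
  set T := (∫ t in Ioi 0, t * w t) / D
  have hT : 0 < T := div_pos (hpos htw_int fun t ht => mul_pos ht (hw t ht)) hD
  have hTD : T * D = ∫ t in Ioi 0, t * w t := div_mul_cancel₀ _ hD.ne'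
  have hexpand : (fun t => (h T - h t) * (t - T) * w t) =
      fun t => h T * (t * w t) - h T * T * w t - t * (h t * w t) + T * (h t * w t) := by
    funext t; ring
  have hsign : 0 < ∫ t in Ioi 0, (h T - h t) * (t - T) * w t := by
    refine setIntegral_Ioi_pos ?_ (fun t ht => ?_) ?_
    · rw [hexpand]
      exact (((htw_int.const_mul _).sub (hw_int.const_mul _)).sub hthw_int).add
        (hhw_int.const_mul _)
    · refine mul_nonneg ?_ (hw t ht).le
      rcases eq_or_ne T t with rfl | hTt
      · simp
      · exact (hh.sub_mul_sub_pos hT ht hTt).le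
    · filter_upwards [eventually_gt_atTop T] with t hTt
      exact mul_pos (hh.sub_mul_sub_pos hT (hT.trans hTt) hTt.ne) (hw t (hT.trans hTt))
  have hsign_eq : ∫ t in Ioi 0, (h T - h t) * (t - T) * w t =
      T * (∫ t in Ioi 0, h t * w t) - ∫ t in Ioi 0, t * (h t * w t) := by
    rw [hexpand, integral_add ?_ (hhw_int.const_mul _), integral_sub ?_ hthw_int,
      integral_sub (htw_int.const_mul _) (hw_int.const_mul _), integral_const_mul,
      integral_const_mul, integral_const_mul, ← hTD]
    · ring
    · exact (htw_int.const_mul _).sub (hw_int.const_mul _)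
    · exact ((htw_int.const_mul _).sub (hw_int.const_mul _)).sub hthw_int
  calc (∫ t in Ioi 0, t * (h t * w t)) * D < T * (∫ t in Ioi 0, h t * w t) * D := by
        gcongr; linarith [hsign_eq ▸ hsign]
    _ = (∫ t in Ioi 0, t * w t) * ∫ t in Ioi 0, h t * w t := by rw [← hTD]; ring

noncomputable def polygammaIntegrand (k : ℕ) (x t : ℝ) : ℝ :=
  t ^ k * exp (-x * t) / (1 - exp (-t))

namespace polygammaIntegrand

variable {k : ℕ} {x t : ℝ}

lemma succ : polygammaIntegrand (k + 1) x t = t * polygammaIntegrand k x t := by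
  unfold polygammaIntegrand; ring

lemma nonneg (ht : 0 < t) : 0 ≤ polygammaIntegrand k x t :=
  div_nonneg (by positivity) (one_sub_exp_neg_pos ht).le

lemma succ_le (ht : 0 < t) :
    polygammaIntegrand (k + 1) x t ≤ (t ^ k + t ^ (k + 1)) * exp (-x * t) := by
  rw [polygammaIntegrand, div_le_iff₀ (one_sub_exp_neg_pos ht)]
  have := mul_le_mul_of_nonneg_left (le_one_add_mul_one_sub_exp_neg t)
    (by positivity : 0 ≤ t ^ k * exp (-x * t))
  linear_combination this

lemma integrableOn (k : ℕ) (hx : 0 < x) :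
    IntegrableOn (polygammaIntegrand (k + 1) x) (Ioi 0) := by
  have hpow (n : ℕ) : IntegrableOn (fun t : ℝ => t ^ n * exp (-x * t)) (Ioi 0) := by
    refine (integrableOn_rpow_mul_exp_neg_mul_rpow (p := 1) (s := n)
      (by linarith [n.cast_nonneg (α := ℝ)]) one_pos hx).congr_fun (fun t _ => ?_) measurableSet_Ioi
    simp [rpow_natCast]
  refine (((hpow k).add (hpow (k + 1))).congr_fun (fun t _ => add_mul _ _ _ |>.symm)
    measurableSet_Ioi).mono'
    (Measurable.aestronglyMeasurable (by unfold polygammaIntegrand; fun_prop)) ?_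
  filter_upwards [self_mem_ae_restrict measurableSet_Ioi] with t ht
  rw [norm_of_nonneg (nonneg ht)]
  exact succ_le ht

end polygammaIntegrand

lemma polygammaIntegrand_strictAnti (k : ℕ) {t : ℝ} (ht : 0 < t) :
    StrictAnti fun x => polygammaIntegrand k x t := by
  intro x y hxy
  dsimp only [polygammaIntegrand]
  gcongr
  exact one_sub_exp_neg_pos ht

lemma integral_polygammaIntegrand_sub_pos (k : ℕ) {x y : ℝ} (hx : 0 < x) (hxy : x < y) :
    0 < ∫ t in Ioi 0, (polygammaIntegrand (k + 1) x t - polygammaIntegrand (k + 1) y t) :=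
  setIntegral_Ioi_pos ((polygammaIntegrand.integrableOn k hx).sub
      (polygammaIntegrand.integrableOn k (hx.trans hxy)))
    (fun _ ht => (sub_pos.2 (polygammaIntegrand_strictAnti (k + 1) ht hxy)).le)
    ((eventually_gt_atTop 0).mono fun _ ht =>
      sub_pos.2 (polygammaIntegrand_strictAnti (k + 1) ht hxy))

noncomputable def shiftRatio (μ β t : ℝ) : ℝ :=
  (1 - exp (-(β * t))) / (exp (μ * t) - 1)

lemma mul_one_sub_exp_neg_lt_mul_exp_sub_one {μ β t : ℝ} (hμ : 0 < μ) (hβ : 0 < β) (ht : 0 < t) :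
    β * (1 - exp (-(μ * t))) < μ * (exp (β * t) - 1) := by
  have h₁ := add_one_lt_exp (x := -(μ * t)) (by nlinarith)
  have h₂ := add_one_lt_exp (x := β * t) (by nlinarith)
  calc β * (1 - exp (-(μ * t))) < β * (μ * t) := by gcongr; linarith
    _ = μ * (β * t) := by ring
    _ < μ * (exp (β * t) - 1) := by gcongr; linarith

lemma strictAntiOn_shiftRatio {μ β : ℝ} (hμ : 0 < μ) (hβ : 0 < β) :
    StrictAntiOn (shiftRatio μ β) (Ioi 0) := by
  have hden {t : ℝ} (ht : 0 < t) : 0 < exp (μ * t) - 1 := by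
    linarith [one_lt_exp_iff.2 (mul_pos hμ ht)]
  have hcont : ContinuousOn (shiftRatio μ β) (Ioi 0) :=
    ContinuousOn.div (by fun_prop) (by fun_prop) fun t ht => (hden ht).ne'
  refine strictAntiOn_of_deriv_neg (convex_Ioi 0) hcont fun t ht => ?_
  rw [interior_Ioi] at ht
  have hnum : HasDerivAt (fun s => 1 - exp (-(β * s))) (β * exp (-(β * t))) t := by
    simpa [mul_comm] using (((hasDerivAt_id t).const_mul β).neg.exp).const_sub 1
  have hden' : HasDerivAt (fun s => exp (μ * s) - 1) (μ * exp (μ * t)) t := by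
    simpa [mul_comm] using (((hasDerivAt_id t).const_mul μ).exp).sub_const 1
  rw [(show HasDerivAt (shiftRatio μ β) _ t from hnum.div hden' (hden ht).ne').deriv]
  refine div_neg_of_neg_of_pos ?_ (by have := hden ht; positivity)
  have key := mul_one_sub_exp_neg_lt_mul_exp_sub_one hμ hβ ht
  have e₁ : exp (μ * t) * exp (-(μ * t)) = 1 := by rw [← exp_add, add_neg_cancel, exp_zero]
  have e₂ : exp (β * t) * exp (-(β * t)) = 1 := by rw [← exp_add, add_neg_cancel, exp_zero]
  have := mul_lt_mul_of_pos_left key (mul_pos (exp_pos (μ * t)) (exp_pos (-(β * t))))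
  linear_combination this + β * exp (-(β * t)) * e₁ + μ * exp (μ * t) * e₂

lemma polygammaIntegrand_sub_eq_shiftRatio_mul (k : ℕ) {x μ β t : ℝ} (hμ : μ ≠ 0) (ht : 0 < t) :
    polygammaIntegrand k (x + μ) t - polygammaIntegrand k (x + μ + β) t =
      shiftRatio μ β t * (polygammaIntegrand k x t - polygammaIntegrand k (x + μ) t) := by
  have hE : exp (μ * t) - 1 ≠ 0 := sub_ne_zero.2 (exp_eq_one_iff _ |>.not.2 (mul_ne_zero hμ ht.ne'))
  have hd : 1 - exp (-t) ≠ 0 := (one_sub_exp_neg_pos ht).ne'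
  have e₁ : exp (-(x + μ) * t) = exp (-x * t) / exp (μ * t) := by
    rw [← exp_sub]; ring_nf
  have e₂ : exp (-(x + μ + β) * t) = exp (-x * t) / exp (μ * t) * exp (-(β * t)) := by
    rw [← exp_sub, ← exp_add]; ring_nf
  unfold polygammaIntegrand shiftRatio
  rw [e₁, e₂, div_mul_eq_mul_div (1 - _), eq_div_iff hE]
  field_simp

lemma integral_polygammaIntegrand_chebyshev {θ μ β : ℝ} (hθ : 0 < θ) (hμ : 0 < μ) (hβ : 0 < β) :
    (∫ t in Ioi 0, t * (polygammaIntegrand 1 (θ + μ) t - polygammaIntegrand 1 (θ + μ + β) t)) *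
        (∫ t in Ioi 0, (polygammaIntegrand 1 θ t - polygammaIntegrand 1 (θ + μ) t)) <
      (∫ t in Ioi 0, t * (polygammaIntegrand 1 θ t - polygammaIntegrand 1 (θ + μ) t)) *
        ∫ t in Ioi 0, (polygammaIntegrand 1 (θ + μ) t - polygammaIntegrand 1 (θ + μ + β) t) := by
  have hint (k : ℕ) {x : ℝ} (hx : 0 < x) (y : ℝ) (hy : 0 < y) :
      IntegrableOn (fun t => polygammaIntegrand (k + 1) x t - polygammaIntegrand (k + 1) y t)
        (Ioi 0) :=
    (polygammaIntegrand.integrableOn k hx).sub (polygammaIntegrand.integrableOn k hy)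
  have hmul (x y t : ℝ) : t * (polygammaIntegrand 1 x t - polygammaIntegrand 1 y t) =
      polygammaIntegrand 2 x t - polygammaIntegrand 2 y t := by
    rw [mul_sub, ← polygammaIntegrand.succ, ← polygammaIntegrand.succ]
  have hshift : EqOn
      (fun t => polygammaIntegrand 1 (θ + μ) t - polygammaIntegrand 1 (θ + μ + β) t)
      (fun t => shiftRatio μ β t * (polygammaIntegrand 1 θ t - polygammaIntegrand 1 (θ + μ) t))
      (Ioi 0) :=
    fun t ht => polygammaIntegrand_sub_eq_shiftRatio_mul 1 hμ.ne' ht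
  have hθμ : 0 < θ + μ := by positivity
  have hθμβ : 0 < θ + μ + β := by positivity
  rw [setIntegral_congr_fun measurableSet_Ioi hshift,
    setIntegral_congr_fun measurableSet_Ioi fun t ht => congrArg (t * ·) (hshift ht)]
  refine integral_id_mul_mul_lt_of_strictAntiOn
    (fun _ ht => sub_pos.2 (polygammaIntegrand_strictAnti 1 ht (by linarith)))
    (strictAntiOn_shiftRatio hμ hβ) (hint 0 hθ _ hθμ) ?_
    ((hint 0 hθμ _ hθμβ).congr_fun hshift measurableSet_Ioi) ?_
  · simpa only [hmul] using hint 1 hθ _ hθμ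
  · refine (hint 1 hθμ _ hθμβ).congr_fun (fun t ht => ?_) measurableSet_Ioi
    exact (hmul _ _ t).symm.trans (congrArg (t * ·) (hshift ht))

/-- For positive reals `θ, μ, β`,
`(Ψ_2(θ+μ+β)-Ψ_2(θ+μ))/(Ψ_1(θ+μ+β)-Ψ_1(θ+μ)) > (Ψ_2(θ+μ)-Ψ_2(θ))/(Ψ_1(θ+μ)-Ψ_1(θ))`,
where `Ψ n` is the polygamma function of order `n`, characterized by its integral
representation for `x > 0`. -/
theorem stmt_2
    (Ψ : ℕ → ℝ → ℝ)
    (hΨ : ∀ (k : ℕ) (x : ℝ), 1 ≤ k → 0 < x →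
      Ψ k x = (-1 : ℝ) ^ (k + 1) *
        ∫ t in Set.Ioi (0 : ℝ), t ^ k * Real.exp (-x * t) / (1 - Real.exp (-t)))
    (θ μ β : ℝ) (hθ : 0 < θ) (hμ : 0 < μ) (hβ : 0 < β) :
    (Ψ 2 (θ + μ + β) - Ψ 2 (θ + μ)) / (Ψ 1 (θ + μ + β) - Ψ 1 (θ + μ)) >
      (Ψ 2 (θ + μ) - Ψ 2 θ) / (Ψ 1 (θ + μ) - Ψ 1 θ) := by
  have hΨ₁ {x y : ℝ} (hx : 0 < x) (hy : 0 < y) : Ψ 1 y - Ψ 1 x =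
      -∫ t in Ioi 0, (polygammaIntegrand 1 x t - polygammaIntegrand 1 y t) := by
    rw [hΨ 1 x le_rfl hx, hΨ 1 y le_rfl hy, integral_sub (polygammaIntegrand.integrableOn 0 hx)
      (polygammaIntegrand.integrableOn 0 hy)]
    simp [polygammaIntegrand]
  have hΨ₂ {x y : ℝ} (hx : 0 < x) (hy : 0 < y) : Ψ 2 y - Ψ 2 x =
      ∫ t in Ioi 0, t * (polygammaIntegrand 1 x t - polygammaIntegrand 1 y t) := by
    simp only [mul_sub, ← polygammaIntegrand.succ]
    rw [hΨ 2 x one_le_two hx, hΨ 2 y one_le_two hy, integral_sub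
      (polygammaIntegrand.integrableOn 1 hx) (polygammaIntegrand.integrableOn 1 hy)]
    simp only [polygammaIntegrand]
    ring
  have hθμ : 0 < θ + μ := by positivity
  rw [hΨ₁ hθμ (by positivity), hΨ₂ hθμ (by positivity), hΨ₁ hθ hθμ, hΨ₂ hθ hθμ, gt_iff_lt,
    div_neg, div_neg, neg_lt_neg_iff,
    div_lt_div_iff₀ (integral_polygammaIntegrand_sub_pos 0 hθμ (by linarith))
      (integral_polygammaIntegrand_sub_pos 0 hθ (by linarith))]
  exact integral_polygammaIntegrand_chebyshev hθ hμ hβ
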